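/- In the global model with local reward r : A × X → ℝ, for every local policy μ and every external policy η, the expected total local reward satisfies E[Σ_{t=0}^{h−1} r(a^t, x^t)] ≤ V̂^P, where V̂^P := sup_π Σ_{(x,y)∈X×Y} b0(x,y)·ν^IO_h(π)(x), the supremum ranging over all depth-h local policies π, and where the influence-optimistic value vectors are defined by ν^IO_0(π)(x) = 0 and ν^IO_{k+1}(π)(x) = r(π(ε),x) + Σ_{o∈O} max_{u∈U} Σ_{x'=(x'l,x'n)∈X} Ω(o|π(ε),x')·Pl(x'l|x,π(ε))·Pn(x'n|x,π(ε),u)·ν^IO_k(π↓o)(x'). In particular, the locally-optimal value of the sub-problem is at most the influence-optimistic Q-MPOMDP upper bound V̂^P. -/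

import Mathlib

/-!
Unrolling the expected reward one step, the external next state `y'` is averaged out (`G` sums
to one), leaving for each observation `o` a sum over local next states weighted by `Pn` at the
realised influence value `σ(s, (a, e))`. Replacing that value by the most favourable `u ∈ U` can
only increase the sum, and by induction the continuation of `μ` after `o` is bounded by
`ν^IO` of the subtree policy `μ↓o`; so from every state the expected reward is at most
`ν^IO_h(μ)`. The supremum over `π` is a maximum over finitely many values, since `ν^IO_h(π)` only
sees the values of `π` on the finitely many observation histories of length `< h`.
-/

theorem DependsOn.finite_range {ι β : Type*} {α : ι → Type*} [∀ i, Finite (α i)]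
    {f : (Π i, α i) → β} {s : Set ι} (hf : DependsOn f s) (hs : s.Finite) :
    (Set.range f).Finite := by
  rcases isEmpty_or_nonempty β with hβ | hβ
  · exact Set.toFinite _
  obtain ⟨g, rfl⟩ := dependsOn_iff_exists_comp.mp hf
  have := hs.to_subtype
  exact (Set.finite_range g).subset (Set.range_comp_subset_range _ _)

theorem Fintype.sum_prod_mul_of_sum_eq_one {α β R : Type*} [Fintype α] [Fintype β]
    [NonAssocSemiring R] (g : β → α → R) (hg : ∀ a, ∑ b, g b a = 1) (f : α → R) :
    ∑ p : α × β, g p.2 p.1 * f p.1 = ∑ a, f a := by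
  simp only [Fintype.sum_prod_type, ← Finset.sum_mul, hg, one_mul]

open Finset

section GlobalModel

variable {Xl Xn Y A E O U : Type*}
  [Fintype Xl] [Nonempty Xl] [Fintype Xn] [Nonempty Xn] [Fintype Y] [Nonempty Y]
  [Fintype A] [Nonempty A] [Fintype E] [Nonempty E]
  [Fintype O] [Nonempty O] [Fintype U] [Nonempty U]

/-- Expected total local reward `E[∑_{t<k} r(a^t, x^t)]` in the global model, obtained
by backward recursion over the remaining horizon `k`: local actions are chosen by the
local policy `μ` from the local observation history `obs`, external actions by the
external policy `η` from the entire history so far (current state `s` together with the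
list `hist` of all past states, joint actions and observations); the global transition
probability is `Pl · Pn(·|σ) · G` and local observations have probability `Ω`. -/
noncomputable def expTotalr (Pl : Xl → (Xl × Xn) → A → ℝ)
    (Pn : Xn → (Xl × Xn) → A → U → ℝ)
    (G : Y → ((Xl × Xn) × Y) → A × E → (Xl × Xn) → ℝ)
    (σ : ((Xl × Xn) × Y) → A × E → U) (Ω : O → A → (Xl × Xn) → ℝ)
    (r : A → (Xl × Xn) → ℝ)
    (μ : List O → A)
    (η : ((Xl × Xn) × Y) → List (((Xl × Xn) × Y) × (A × E) × O) → E) :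
    ℕ → ((Xl × Xn) × Y) → List O → List (((Xl × Xn) × Y) × (A × E) × O) → ℝ
  | 0 => fun _ _ _ => 0
  | k + 1 => fun s obs hist =>
      r (μ obs) s.1 +
        ∑ s' : (Xl × Xn) × Y, ∑ o : O,
          Pl s'.1.1 s.1 (μ obs) * Pn s'.1.2 s.1 (μ obs) (σ s (μ obs, η s hist)) *
            G s'.2 s (μ obs, η s hist) s'.1 * Ω o (μ obs) s'.1 *
            expTotalr Pl Pn G σ Ω r μ η k s' (obs ++ [o])
              (hist ++ [(s, (μ obs, η s hist), o)])

/-- Influence-optimistic (IO, Q-MPOMDP style) value vectors `ν^IO_k(π)(x)`. A depth-`k`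
local policy is a function `List O → A`; `π []` is its action at the empty history and
`fun h => π (o :: h)` is the subtree policy `π↓o`. -/
noncomputable def nuIO (Pl : Xl → (Xl × Xn) → A → ℝ) (Pn : Xn → (Xl × Xn) → A → U → ℝ)
    (Ω : O → A → (Xl × Xn) → ℝ) (r : A → (Xl × Xn) → ℝ) :
    ℕ → (List O → A) → (Xl × Xn) → ℝ
  | 0 => fun _ _ => 0
  | k + 1 => fun π x =>
      r (π []) x + ∑ o : O,
        Finset.univ.sup' Finset.univ_nonempty (fun u : U =>
          ∑ x' : Xl × Xn,
            Ω o (π []) x' * Pl x'.1 x (π []) * Pn x'.2 x (π []) u *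
              nuIO Pl Pn Ω r k (fun h => π (o :: h)) x')

end GlobalModel

section InfluenceOptimisticBound

variable {Xl Xn Y A E O U : Type*} [Fintype Xl] [Fintype Xn] [Fintype Y] [Fintype O]
  [Fintype U] [Nonempty U]
  (Pl : Xl → (Xl × Xn) → A → ℝ) (Pn : Xn → (Xl × Xn) → A → U → ℝ)
  (G : Y → ((Xl × Xn) × Y) → A × E → (Xl × Xn) → ℝ)
  (σ : ((Xl × Xn) × Y) → A × E → U) (Ω : O → A → (Xl × Xn) → ℝ) (r : A → (Xl × Xn) → ℝ)

theorem nuIO_dependsOn (k : ℕ) (x : Xl × Xn) :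
    DependsOn (fun π : List O → A => nuIO Pl Pn Ω r k π x) {l | l.length < k} := by
  induction k generalizing x with
  | zero => exact fun _ _ _ => rfl
  | succ k ih =>
    intro π π' hππ'
    have hroot : π [] = π' [] := hππ' [] (Nat.succ_pos k)
    have hsubtree : ∀ o x', nuIO Pl Pn Ω r k (fun l => π (o :: l)) x' =
        nuIO Pl Pn Ω r k (fun l => π' (o :: l)) x' :=
      fun o x' => ih x' fun l hl => hππ' (o :: l) (Nat.succ_lt_succ hl)
    simp only [nuIO, hroot, hsubtree]

theorem expTotalr_le_nuIO (hPl0 : ∀ x'l x a, 0 ≤ Pl x'l x a)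
    (hPn0 : ∀ x'n x a u, 0 ≤ Pn x'n x a u) (hG0 : ∀ y' s ae x', 0 ≤ G y' s ae x')
    (hG1 : ∀ s ae x', ∑ y' : Y, G y' s ae x' = 1) (hΩ0 : ∀ o a x', 0 ≤ Ω o a x')
    (μ : List O → A) (η : ((Xl × Xn) × Y) → List (((Xl × Xn) × Y) × (A × E) × O) → E)
    (k : ℕ) (s : (Xl × Xn) × Y) (obs : List O)
    (hist : List (((Xl × Xn) × Y) × (A × E) × O)) :
    expTotalr Pl Pn G σ Ω r μ η k s obs hist ≤
      nuIO Pl Pn Ω r k (fun l => μ (obs ++ l)) s.1 := by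
  induction k generalizing s obs hist with
  | zero => exact le_rfl
  | succ k ih =>
    set a := μ obs
    set e := η s hist
    set u₀ := σ s (a, e)
    set V : O → Xl × Xn → ℝ := fun o x' => nuIO Pl Pn Ω r k (fun l => μ (obs ++ o :: l)) x'
    have hstep : ∀ s' o, expTotalr Pl Pn G σ Ω r μ η k s' (obs ++ [o])
        (hist ++ [(s, (a, e), o)]) ≤ V o s'.1 := fun s' o => by
      simpa [V] using ih s' (obs ++ [o]) (hist ++ [(s, (a, e), o)])
    have hfactor : ∀ s' : (Xl × Xn) × Y, ∑ o : O, Pl s'.1.1 s.1 a * Pn s'.1.2 s.1 a u₀ *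
        G s'.2 s (a, e) s'.1 * Ω o a s'.1 * V o s'.1 = G s'.2 s (a, e) s'.1 *
        ∑ o : O, Ω o a s'.1 * Pl s'.1.1 s.1 a * Pn s'.1.2 s.1 a u₀ * V o s'.1 := fun s' => by
      rw [Finset.mul_sum]
      exact Finset.sum_congr rfl fun o _ => by ring
    calc expTotalr Pl Pn G σ Ω r μ η (k + 1) s obs hist
        ≤ r a s.1 + ∑ s' : (Xl × Xn) × Y, ∑ o : O, Pl s'.1.1 s.1 a * Pn s'.1.2 s.1 a u₀ *
            G s'.2 s (a, e) s'.1 * Ω o a s'.1 * V o s'.1 := by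
          simp only [expTotalr]
          gcongr with s' _ o _
          · exact mul_nonneg (mul_nonneg (mul_nonneg (hPl0 _ _ _) (hPn0 _ _ _ _)) (hG0 _ _ _ _))
              (hΩ0 _ _ _)
          · exact hstep s' o
      _ = r a s.1 + ∑ o : O, ∑ x' : Xl × Xn,
            Ω o a x' * Pl x'.1 s.1 a * Pn x'.2 s.1 a u₀ * V o x' := by
          rw [Finset.sum_congr rfl fun s' _ => hfactor s',
            Fintype.sum_prod_mul_of_sum_eq_one (fun y' x' => G y' s (a, e) x') (hG1 s (a, e))
              fun x' => ∑ o : O, Ω o a x' * Pl x'.1 s.1 a * Pn x'.2 s.1 a u₀ * V o x',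
            Finset.sum_comm]
      _ ≤ nuIO Pl Pn Ω r (k + 1) (fun l => μ (obs ++ l)) s.1 := by
          simp only [nuIO, List.append_nil]
          gcongr with o
          exact Finset.le_sup' (fun u => ∑ x' : Xl × Xn,
            Ω o a x' * Pl x'.1 s.1 a * Pn x'.2 s.1 a u * V o x') (Finset.mem_univ u₀)

end InfluenceOptimisticBound

section GlobalModel

variable {Xl Xn Y A E O U : Type*}
  [Fintype Xl] [Nonempty Xl] [Fintype Xn] [Nonempty Xn] [Fintype Y] [Nonempty Y]
  [Fintype A] [Nonempty A] [Fintype E] [Nonempty E]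
  [Fintype O] [Nonempty O] [Fintype U] [Nonempty U]

theorem expTotalr_le_IO_QMPOMDP_general
    (Pl : Xl → (Xl × Xn) → A → ℝ) (Pn : Xn → (Xl × Xn) → A → U → ℝ)
    (G : Y → ((Xl × Xn) × Y) → A × E → (Xl × Xn) → ℝ)
    (σ : ((Xl × Xn) × Y) → A × E → U) (Ω : O → A → (Xl × Xn) → ℝ)
    (r : A → (Xl × Xn) → ℝ)
    (hPl0 : ∀ x'l x a, 0 ≤ Pl x'l x a)
    (hPn0 : ∀ x'n x a u, 0 ≤ Pn x'n x a u)
    (hG0 : ∀ y' s ae x', 0 ≤ G y' s ae x') (hG1 : ∀ s ae x', ∑ y' : Y, G y' s ae x' = 1)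
    (hΩ0 : ∀ o a x', 0 ≤ Ω o a x')
    (b0 : (Xl × Xn) × Y → ℝ) (hb00 : ∀ s, 0 ≤ b0 s)
    (h : ℕ) (μ : List O → A)
    (η : ((Xl × Xn) × Y) → List (((Xl × Xn) × Y) × (A × E) × O) → E) :
    ∑ s : (Xl × Xn) × Y, b0 s * expTotalr Pl Pn G σ Ω r μ η h s [] [] ≤
      ⨆ π : List O → A, ∑ p : (Xl × Xn) × Y, b0 p * nuIO Pl Pn Ω r h π p.1 := by
  have hbdd : BddAbove (Set.range fun π : List O → A =>
      ∑ p : (Xl × Xn) × Y, b0 p * nuIO Pl Pn Ω r h π p.1) := by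
    refine (DependsOn.finite_range (fun π π' hππ' => ?_) (List.finite_length_lt O h)).bddAbove
    exact Finset.sum_congr rfl fun p _ =>
      congrArg (b0 p * ·) (nuIO_dependsOn Pl Pn Ω r h p.1 hππ')
  calc ∑ s : (Xl × Xn) × Y, b0 s * expTotalr Pl Pn G σ Ω r μ η h s [] []
      ≤ ∑ p : (Xl × Xn) × Y, b0 p * nuIO Pl Pn Ω r h μ p.1 := by
        gcongr with s _
        · exact hb00 s
        · exact expTotalr_le_nuIO Pl Pn G σ Ω r hPl0 hPn0 hG0 hG1 hΩ0 μ η h s [] []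
    _ ≤ ⨆ π : List O → A, ∑ p : (Xl × Xn) × Y, b0 p * nuIO Pl Pn Ω r h π p.1 :=
      le_ciSup hbdd μ

/-- in the global model, for every local policy `μ` and every external
policy `η`, the expected total local reward is at most the influence-optimistic
Q-MPOMDP upper bound `V̂^P = sup_π ∑_{(x,y)} b0(x,y) · ν^IO_h(π)(x)`; in particular the
locally-optimal value of the sub-problem is at most `V̂^P`. -/
theorem expTotalr_le_IO_QMPOMDP
    (Pl : Xl → (Xl × Xn) → A → ℝ) (Pn : Xn → (Xl × Xn) → A → U → ℝ)
    (G : Y → ((Xl × Xn) × Y) → A × E → (Xl × Xn) → ℝ)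
    (σ : ((Xl × Xn) × Y) → A × E → U) (Ω : O → A → (Xl × Xn) → ℝ)
    (r : A → (Xl × Xn) → ℝ)
    (hPl0 : ∀ x'l x a, 0 ≤ Pl x'l x a) (hPl1 : ∀ x a, ∑ x'l : Xl, Pl x'l x a = 1)
    (hPn0 : ∀ x'n x a u, 0 ≤ Pn x'n x a u) (hPn1 : ∀ x a u, ∑ x'n : Xn, Pn x'n x a u = 1)
    (hG0 : ∀ y' s ae x', 0 ≤ G y' s ae x') (hG1 : ∀ s ae x', ∑ y' : Y, G y' s ae x' = 1)
    (hΩ0 : ∀ o a x', 0 ≤ Ω o a x') (hΩ1 : ∀ a x', ∑ o : O, Ω o a x' = 1)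
    (b0 : (Xl × Xn) × Y → ℝ) (hb00 : ∀ s, 0 ≤ b0 s) (hb01 : ∑ s : (Xl × Xn) × Y, b0 s = 1)
    (h : ℕ) (μ : List O → A)
    (η : ((Xl × Xn) × Y) → List (((Xl × Xn) × Y) × (A × E) × O) → E) :
    ∑ s : (Xl × Xn) × Y, b0 s * expTotalr Pl Pn G σ Ω r μ η h s [] [] ≤
      ⨆ π : List O → A, ∑ p : (Xl × Xn) × Y, b0 p * nuIO Pl Pn Ω r h π p.1 :=
  expTotalr_le_IO_QMPOMDP_general Pl Pn G σ Ω r hPl0 hPn0 hG0 hG1 hΩ0 b0 hb00 h μ η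

end GlobalModel
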